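/- Let v₁, …, v_n be a basis of ℝⁿ, Λ the lattice it spans, U its unit cell with diameter d, M ⊂ U a finite motif of exactly m ≥ 1 points, S = M + Λ, and PPC(S) = (vol(U)/(m·V_n))^{1/n} where V_n is the volume of the unit ball of ℝⁿ. Fix integers h, k ≥ 1 and a real number b ≥ h with C(b,h) = b(b−1)⋯(b−h+1)/h! ∈ (k−1, k]. Then for every p ∈ S, the k-th smallest h-order average a(h,k) at p over h-element subsets of S∖{p} satisfies (2/(h+1))·(PPC(S)·(b+1)^{1/n} − d) ≤ a(h,k) ≤ (2h/(h+1))·(PPC(S)·(b+1)^{1/n} + d). -/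

import Mathlib

/-!
Translates of the unit cell `U` by `Λ` tile space and each carries exactly `m` points of `S`; the
radius `ρ = PPC(S)·(b+1)^(1/n)` is chosen so that `m · vol B(p, ρ) = (b+1) · vol U`.

Upper bound: the cells meeting `B(p, ρ)` cover it, so there are at least `(b+1)/m` of them, and
their motif points give at least `b+1` points of `S` within `ρ + d` of `p`. Discarding `p`, at least
`C(b,h) > k-1` of the `h`-subsets of these points have average at most `2h/(h+1)·(ρ+d)`.

Lower bound: a subset with average `≤ a` has all its points within `(h+1)a/2` of `p`. The cells of
the points of `S` in `B(p, ρ-d)` are disjoint and lie in a closed ball of radius `< ρ`, so fewer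
than `b+1` points of `S` lie in `B(p, ρ-d)`, and fewer than `C(b,h) ≤ k` of the `h`-subsets
avoiding `p` lie there.
-/

open scoped ENNReal

/-- The h-order average of a point `p` together with a finite set `T` of
points: the mean `(2/(h(h+1))) Σ_{0≤i<j≤h} dist(p_i,p_j)` of all pairwise
distances among the `h+1` points `p, T` (for `T` of cardinality `h` not
containing `p`). -/
noncomputable def horderAvg {E : Type*} [PseudoMetricSpace E] (h : ℕ)
    (p : E) (T : Finset E) : ℝ :=
  2 / ((h : ℝ) * ((h : ℝ) + 1)) *
    ((∑ q ∈ T, dist p q) + (∑ q ∈ T, ∑ r ∈ T, dist q r) / 2)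

open MeasureTheory Metric Submodule Bornology ZSpan
open scoped Pointwise

section HorderAvg

variable {E : Type*} [PseudoMetricSpace E] {h : ℕ} {p q : E} {T : Finset E}

lemma two_mul_sum_dist_le_sum_sum_dist (hq : q ∈ T) :
    2 * ∑ r ∈ T, dist q r ≤ ∑ q' ∈ T, ∑ r ∈ T, dist q' r := by
  classical
  calc 2 * ∑ r ∈ T, dist q r = ∑ r ∈ T, dist q r + ∑ q' ∈ T.erase q, dist q' q := by
        rw [Finset.sum_erase T (f := fun q' => dist q' q) (dist_self q), two_mul]
        simp_rw [dist_comm]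
    _ ≤ ∑ r ∈ T, dist q r + ∑ q' ∈ T.erase q, ∑ r ∈ T, dist q' r := by
        gcongr with q'
        exact Finset.single_le_sum (f := fun r => dist q' r) (fun r _ => dist_nonneg) hq
    _ = ∑ q' ∈ T, ∑ r ∈ T, dist q' r :=
        Finset.add_sum_erase T (fun q' => ∑ r ∈ T, dist q' r) hq

lemma div_mul_dist_le_horderAvg (hh : 1 ≤ h) (hT : T.card = h) (hq : q ∈ T) :
    2 / ((h : ℝ) + 1) * dist p q ≤ horderAvg h p T := by
  have hpq : (h : ℝ) * dist p q ≤ ∑ r ∈ T, dist p r + ∑ r ∈ T, dist q r := by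
    rw [← Finset.sum_add_distrib, ← hT, ← nsmul_eq_mul, ← Finset.sum_const]
    exact Finset.sum_le_sum fun r _ => (dist_triangle p r q).trans_eq (by rw [dist_comm r q])
  have key : (h : ℝ) * dist p q ≤
      (∑ r ∈ T, dist p r) + (∑ q' ∈ T, ∑ r ∈ T, dist q' r) / 2 := by
    linarith [two_mul_sum_dist_le_sum_sum_dist hq]
  have hh' : (0 : ℝ) < h := by exact_mod_cast hh
  calc 2 / ((h : ℝ) + 1) * dist p q
      = 2 / ((h : ℝ) * ((h : ℝ) + 1)) * ((h : ℝ) * dist p q) := by field_simp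
    _ ≤ horderAvg h p T := mul_le_mul_of_nonneg_left key (by positivity)

lemma horderAvg_le_of_forall_dist_le (hh : 1 ≤ h) (hT : T.card = h) {R : ℝ}
    (hR : ∀ q ∈ T, dist p q ≤ R) : horderAvg h p T ≤ 2 * (h : ℝ) / ((h : ℝ) + 1) * R := by
  classical
  have hrow : ∀ q ∈ T, ∑ r ∈ T, dist q r ≤ ((h : ℝ) - 1) * (2 * R) := by
    intro q hq
    have hcard : ((T.erase q).card : ℝ) = (h : ℝ) - 1 := by
      rw [← hT, ← Finset.card_erase_add_one hq]
      push_cast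
      ring
    rw [← Finset.sum_erase _ (dist_self q), ← hcard, ← nsmul_eq_mul, ← Finset.sum_const]
    refine Finset.sum_le_sum fun r hr => ?_
    calc dist q r ≤ dist p q + dist p r := dist_triangle_left q r p
      _ ≤ 2 * R := by linarith [hR q hq, hR r (Finset.mem_of_mem_erase hr)]
  have hsum : ∑ q ∈ T, dist p q ≤ (h : ℝ) * R := by
    simpa [← hT] using Finset.sum_le_sum hR
  have hsum2 : ∑ q ∈ T, ∑ r ∈ T, dist q r ≤ (h : ℝ) * (((h : ℝ) - 1) * (2 * R)) := by
    simpa [← hT] using Finset.sum_le_sum hrow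
  have key : (∑ q ∈ T, dist p q) + (∑ q ∈ T, ∑ r ∈ T, dist q r) / 2 ≤ (h : ℝ) ^ 2 * R := by
    nlinarith
  have hh' : (0 : ℝ) < h := by exact_mod_cast hh
  calc horderAvg h p T ≤ 2 / ((h : ℝ) * ((h : ℝ) + 1)) * ((h : ℝ) ^ 2 * R) :=
        mul_le_mul_of_nonneg_left key (by positivity)
    _ = 2 * (h : ℝ) / ((h : ℝ) + 1) * R := by field_simp

variable {S : Set E} {a : ℝ}

lemma choose_card_le_ncard_horderAvg_lt (hh : 1 ≤ h) {P : Finset E} (hPS : ↑P ⊆ S \ {p})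
    {R : ℝ} (hPR : ∀ q ∈ P, dist p q ≤ R) (hRa : 2 * (h : ℝ) / ((h : ℝ) + 1) * R < a)
    (hfin : {T : Finset E | ↑T ⊆ S \ {p} ∧ T.card = h ∧ horderAvg h p T < a}.Finite) :
    P.card.choose h ≤
      {T : Finset E | ↑T ⊆ S \ {p} ∧ T.card = h ∧ horderAvg h p T < a}.ncard := by
  rw [← Finset.card_powersetCard, ← Set.ncard_coe_finset]
  refine Set.ncard_le_ncard (fun T hT => ?_) hfin
  obtain ⟨hTP, hTcard⟩ := Finset.mem_powersetCard.1 hT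
  exact ⟨(Finset.coe_subset.2 hTP).trans hPS, hTcard,
    (horderAvg_le_of_forall_dist_le hh hTcard fun q hq => hPR q (hTP hq)).trans_lt hRa⟩

lemma ncard_horderAvg_le_le_choose_card (hh : 1 ≤ h) {A : Finset E} {r : ℝ}
    (hA : ∀ q ∈ S \ {p}, dist p q < r → q ∈ A) (har : a < 2 / ((h : ℝ) + 1) * r) :
    {T : Finset E | ↑T ⊆ S \ {p} ∧ T.card = h ∧ horderAvg h p T ≤ a}.ncard ≤
      A.card.choose h := by
  rw [← Finset.card_powersetCard, ← Set.ncard_coe_finset]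
  refine Set.ncard_le_ncard (fun T ⟨hTS, hTcard, hTa⟩ => ?_) (Finset.finite_toSet _)
  refine Finset.mem_powersetCard.2 ⟨fun q hq => hA q (hTS hq) ?_, hTcard⟩
  have := (div_mul_dist_le_horderAvg (p := p) hh hTcard hq).trans hTa
  exact lt_of_mul_lt_mul_left (this.trans_lt har) (by positivity)

end HorderAvg

section Binomial

lemma descPochhammer_eval_lt_eval {R : Type*} [CommRing R] [LinearOrder R]
    [IsStrictOrderedRing R] {h : ℕ} (hh : 1 ≤ h) {x y : R} (hx : (h : R) - 1 < x)
    (hxy : x < y) : (descPochhammer R h).eval x < (descPochhammer R h).eval y := by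
  simp only [descPochhammer_eval_eq_prod_range]
  refine Finset.prod_lt_prod_of_nonempty (fun i hi => ?_) (fun i _ => by gcongr)
    (Finset.nonempty_range_iff.2 (by omega))
  have : (i : R) + 1 ≤ h := by exact_mod_cast Finset.mem_range.1 hi
  linarith

variable {b : ℝ} {h k N : ℕ}

lemma le_choose_of_sub_one_lt_descPochhammer_div (hbh : (h : ℝ) ≤ b)
    (hkb : (k : ℝ) - 1 < (descPochhammer ℝ h).eval b / (h.factorial : ℝ)) (hbN : b ≤ N) :
    k ≤ N.choose h := by
  have hmono : (descPochhammer ℝ h).eval b ≤ (descPochhammer ℝ h).eval (N : ℝ) :=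
    monotoneOn_descPochhammer_eval h (Set.mem_Ici.2 (by linarith)) (Set.mem_Ici.2 (by linarith))
      hbN
  have : (k : ℝ) - 1 < N.choose h := by
    rw [Nat.cast_choose_eq_descPochhammer_div]
    exact hkb.trans_le (by gcongr)
  have : (k : ℝ) < N.choose h + 1 := by linarith
  exact_mod_cast Nat.lt_add_one_iff.1 (by exact_mod_cast this)

lemma choose_lt_of_descPochhammer_div_le (hh : 1 ≤ h) (hk : 1 ≤ k)
    (hkb : (descPochhammer ℝ h).eval b / (h.factorial : ℝ) ≤ k) (hNb : (N : ℝ) < b) :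
    N.choose h < k := by
  rcases lt_or_ge N h with hNh | hhN
  · rw [Nat.choose_eq_zero_of_lt hNh]
    omega
  have hhN' : (h : ℝ) ≤ N := by exact_mod_cast hhN
  have hlt : (descPochhammer ℝ h).eval (N : ℝ) < (descPochhammer ℝ h).eval b :=
    descPochhammer_eval_lt_eval hh (by linarith) hNb
  have : (N.choose h : ℝ) < k := by
    rw [Nat.cast_choose_eq_descPochhammer_div]
    exact (by gcongr : _ < (descPochhammer ℝ h).eval b / (h.factorial : ℝ)).trans_le hkb
  exact_mod_cast this

end Binomial

lemma measure_le_card_mul_of_subset_biUnion_vadd {G : Type*} [AddGroup G] [MeasurableSpace G]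
    (μ : Measure G) [μ.IsAddLeftInvariant] {A : Finset G} {s t : Set G}
    (hs : s ⊆ ⋃ g ∈ A, g +ᵥ t) : μ s ≤ A.card * μ t :=
  calc μ s ≤ μ (⋃ g ∈ A, g +ᵥ t) := measure_mono hs
    _ ≤ ∑ g ∈ A, μ (g +ᵥ t) := measure_biUnion_finset_le A _
    _ = A.card * μ t := by simp [measure_vadd]

namespace ZSpan

variable {E ι : Type*} [NormedAddCommGroup E] [NormedSpace ℝ E] [Fintype ι]
  (v : Module.Basis ι ℝ E)

lemma setOf_sum_intCast_smul_eq_span :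
    {x : E | ∃ c : ι → ℤ, x = ∑ i, (c i : ℝ) • v i} = span ℤ (Set.range v) := by
  ext x
  simp only [Set.mem_ofPred_eq, SetLike.mem_coe, mem_span_range_iff_exists_fun,
    Int.cast_smul_eq_zsmul, eq_comm]

lemma setOf_sum_smul_Ico_eq_fundamentalDomain :
    {x : E | ∃ t : ι → ℝ, (∀ i, t i ∈ Set.Ico (0 : ℝ) 1) ∧ x = ∑ i, t i • v i} =
      fundamentalDomain v := by
  ext x
  simp only [mem_fundamentalDomain, Set.mem_ofPred_eq]
  constructor
  · rintro ⟨t, ht, rfl⟩ i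
    rw [v.repr_sum_self]
    exact ht i
  · exact fun hx => ⟨fun i => v.repr x i, hx, (v.sum_repr x).symm⟩

variable {v}

lemma floor_add_of_mem {a g : E} (ha : a ∈ fundamentalDomain v)
    (hg : g ∈ span ℤ (Set.range v)) : (floor v (a + g) : E) = g := by
  have h := fract_apply v (a + g)
  rw [fract_add_ZSpan v a hg, fract_eq_self.2 ha, eq_sub_iff_add_eq] at h
  exact add_left_cancel h

lemma injOn_add_fundamentalDomain_prod_span :
    Set.InjOn (fun x : E × E => x.1 + x.2) (fundamentalDomain v ×ˢ span ℤ (Set.range v)) := by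
  rintro ⟨a, g⟩ ⟨ha, hg⟩ ⟨a', g'⟩ ⟨ha', hg'⟩ (heq : a + g = a' + g')
  dsimp only at ha hg ha' hg'
  obtain rfl : g = g' := by rw [← floor_add_of_mem ha hg, heq, floor_add_of_mem ha' hg']
  exact Prod.ext (add_right_cancel heq) rfl

lemma floor_add_fract (x : E) : (floor v x : E) + fract v x = x := by
  rw [fract_apply, add_sub_cancel]

lemma mem_floor_vadd_fundamentalDomain (x : E) : x ∈ (floor v x : E) +ᵥ fundamentalDomain v :=
  ⟨fract v x, fract_mem_fundamentalDomain v x, floor_add_fract x⟩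

lemma dist_floor_add_le_diam {u : E} (hu : u ∈ fundamentalDomain v) (x : E) :
    dist ((floor v x : E) + u) x ≤ diam (fundamentalDomain v) :=
  calc dist ((floor v x : E) + u) x
      = dist ((floor v x : E) + u) ((floor v x : E) + fract v x) := by rw [floor_add_fract]
    _ = dist u (fract v x) := dist_add_left _ _ _
    _ ≤ diam (fundamentalDomain v) :=
        dist_le_diam_of_mem (fundamentalDomain_isBounded v) hu (fract_mem_fundamentalDomain v x)

lemma pairwiseDisjoint_vadd_fundamentalDomain :
    (span ℤ (Set.range v) : Set E).PairwiseDisjoint (· +ᵥ fundamentalDomain v) := by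
  intro g hg g' hg' hne
  refine Set.disjoint_left.2 ?_
  rintro _ ⟨u, hu, rfl⟩ ⟨u', hu', heq⟩
  have heq' : u' + g' = u + g := by
    rw [add_comm u', add_comm u]
    exact heq
  refine hne ((floor_add_of_mem hu hg).symm.trans ?_)
  rw [← heq']
  exact floor_add_of_mem hu' hg'

section Measure

variable [MeasurableSpace E] [BorelSpace E] (μ : Measure E) [μ.IsAddLeftInvariant]

lemma card_mul_measure_fundamentalDomain_le {A : Finset E}
    (hA : ↑A ⊆ (span ℤ (Set.range v) : Set E)) {s : Set E}
    (hs : ∀ g ∈ A, g +ᵥ fundamentalDomain v ⊆ s) :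
    A.card * μ (fundamentalDomain v) ≤ μ s :=
  calc A.card * μ (fundamentalDomain v) = ∑ g ∈ A, μ (g +ᵥ fundamentalDomain v) := by
        simp [measure_vadd]
    _ = μ (⋃ g ∈ A, g +ᵥ fundamentalDomain v) :=
        (measure_biUnion_finset (pairwiseDisjoint_vadd_fundamentalDomain.subset hA)
          fun g _ => (fundamentalDomain_measurableSet v).const_vadd g).symm
    _ ≤ μ s := measure_mono (Set.iUnion₂_subset hs)

lemma card_mul_measure_fundamentalDomain_le_of_forall_dist_le (M : Finset E)
    (hM : ↑M ⊆ fundamentalDomain v) {A : Finset E}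
    (hA : ↑A ⊆ (M : Set E) + (span ℤ (Set.range v) : Set E)) {p : E} {r : ℝ}
    (hAr : ∀ q ∈ A, dist p q ≤ r) :
    A.card * μ (fundamentalDomain v) ≤
      M.card * μ (closedBall p (r + diam (fundamentalDomain v))) := by
  classical
  set G := A.image fun x => (floor v x : E)
  have hAMG : A ⊆ (M ×ˢ G).image (fun x => x.1 + x.2) := by
    intro x hx
    obtain ⟨a, ha, g, hg, rfl⟩ := hA hx
    exact Finset.mem_image.2 ⟨(a, g), Finset.mem_product.2
      ⟨ha, Finset.mem_image.2 ⟨a + g, hx, floor_add_of_mem (hM ha) hg⟩⟩, rfl⟩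
  have hcard : A.card ≤ M.card * G.card :=
    (Finset.card_le_card hAMG).trans (Finset.card_image_le.trans (Finset.card_product _ _).le)
  have hGL : ↑G ⊆ (span ℤ (Set.range v) : Set E) := by
    intro g hg
    obtain ⟨x, -, rfl⟩ := Finset.mem_image.1 hg
    exact (floor v x).2
  have hcells : ∀ g ∈ G, g +ᵥ fundamentalDomain v ⊆
      closedBall p (r + diam (fundamentalDomain v)) := by
    intro g hg
    obtain ⟨x, hx, rfl⟩ := Finset.mem_image.1 hg
    rintro _ ⟨u, hu, rfl⟩
    rw [mem_closedBall, add_comm r]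
    exact (dist_triangle _ x p).trans
      (add_le_add (dist_floor_add_le_diam hu x) (dist_comm x p ▸ hAr x hx))
  calc (A.card : ℝ≥0∞) * μ (fundamentalDomain v)
      ≤ ((M.card * G.card : ℕ) : ℝ≥0∞) * μ (fundamentalDomain v) := by gcongr
    _ = M.card * (G.card * μ (fundamentalDomain v)) := by push_cast; ring
    _ ≤ M.card * μ (closedBall p (r + diam (fundamentalDomain v))) := by
        gcongr
        exact card_mul_measure_fundamentalDomain_le μ hGL hcells

end Measure

variable [ProperSpace E]

lemma finite_image_floor {s : Set E} (hs : IsBounded s) :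
    ((fun x => (floor v x : E)) '' s).Finite := by
  refine (setFinite_inter v (hs.sub (fundamentalDomain_isBounded v))).subset ?_
  rintro _ ⟨x, hx, rfl⟩
  exact ⟨⟨x, hx, fract v x, fract_mem_fundamentalDomain v x, sub_sub_cancel x _⟩, (floor v x).2⟩

lemma finite_add_span_inter (M : Finset E) {s : Set E} (hs : IsBounded s) :
    (((M : Set E) + (span ℤ (Set.range v) : Set E)) ∩ s).Finite := by
  refine (M.finite_toSet.add (setFinite_inter v (hs.sub M.finite_toSet.isBounded))).subset ?_
  rintro _ ⟨⟨a, ha, g, hg, rfl⟩, hx⟩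
  exact ⟨a, ha, g, ⟨⟨a + g, hx, a, ha, add_sub_cancel_left a g⟩, hg⟩, rfl⟩

lemma exists_finset_add_span_near [MeasurableSpace E] (μ : Measure E) [μ.IsAddLeftInvariant]
    (M : Finset E) (hM : ↑M ⊆ fundamentalDomain v) (p : E) (r : ℝ) :
    ∃ P : Finset E, ↑P ⊆ (M : Set E) + (span ℤ (Set.range v) : Set E) ∧
      (∀ q ∈ P, dist p q ≤ r + diam (fundamentalDomain v)) ∧
      (M.card : ℝ≥0∞) * μ (ball p r) ≤ P.card * μ (fundamentalDomain v) := by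
  classical
  obtain ⟨G, hG⟩ :=
    (finite_image_floor (v := v) (isBounded_ball (x := p) (r := r))).exists_finset_coe
  have hGmem : ∀ {g : E}, g ∈ G ↔ ∃ x ∈ ball p r, (floor v x : E) = g := by
    intro g
    rw [← Finset.mem_coe, hG, Set.mem_image]
  have hGL : ↑G ⊆ (span ℤ (Set.range v) : Set E) := by
    intro g hg
    obtain ⟨x, -, rfl⟩ := hGmem.1 hg
    exact (floor v x).2
  refine ⟨(M ×ˢ G).image (fun x => x.1 + x.2), ?_, ?_, ?_⟩
  · intro q hq
    obtain ⟨⟨a, g⟩, hag, rfl⟩ := Finset.mem_image.1 hq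
    obtain ⟨ha, hg⟩ := Finset.mem_product.1 hag
    exact ⟨a, ha, g, hGL hg, rfl⟩
  · intro q hq
    obtain ⟨⟨a, g⟩, hag, rfl⟩ := Finset.mem_image.1 hq
    obtain ⟨ha, hg⟩ := Finset.mem_product.1 hag
    obtain ⟨x, hx, rfl⟩ := hGmem.1 hg
    calc dist p (a + (floor v x : E)) ≤ dist p x + dist x (a + (floor v x : E)) :=
          dist_triangle _ _ _
      _ ≤ r + diam (fundamentalDomain v) := by
          refine add_le_add (mem_ball'.1 hx).le ?_
          rw [dist_comm, add_comm]
          exact dist_floor_add_le_diam (hM ha) x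
  · have hcard : ((M ×ˢ G).image fun x => x.1 + x.2).card = M.card * G.card := by
      rw [Finset.card_image_of_injOn, Finset.card_product]
      exact injOn_add_fundamentalDomain_prod_span.mono
        (Finset.coe_product M G ▸ Set.prod_mono hM hGL)
    have hcover : ball p r ⊆ ⋃ g ∈ G, g +ᵥ fundamentalDomain v := fun x hx =>
      Set.mem_biUnion (hGmem.2 ⟨x, hx, rfl⟩) (mem_floor_vadd_fundamentalDomain x)
    rw [hcard, Nat.cast_mul, mul_assoc]
    gcongr
    exact measure_le_card_mul_of_subset_biUnion_vadd μ hcover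

end ZSpan

section BallVolume

variable {E : Type*} [NormedAddCommGroup E] [NormedSpace ℝ E] [FiniteDimensional ℝ E]
  [Nontrivial E] [MeasurableSpace E] [BorelSpace E] (μ : Measure E) [μ.IsAddHaarMeasure]

lemma measure_ball_rpow_toReal (p : E) {t : ℝ} (ht : 0 ≤ t) :
    (μ (ball p (t ^ (1 / Module.finrank ℝ E : ℝ)))).toReal =
      t * (μ (ball (0 : E) 1)).toReal := by
  rw [Measure.addHaar_ball μ p (by positivity), ENNReal.toReal_mul, one_div,
    Real.rpow_inv_natCast_pow ht Module.finrank_pos.ne', ENNReal.toReal_ofReal ht]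

lemma natCast_mul_measure_ball_eq {m : ℕ} (hm : m ≠ 0) (p : E) {c t : ℝ} (hc : 0 ≤ c)
    (ht : 0 ≤ t) :
    (m : ℝ) * (μ (ball p ((c / (m * (μ (ball (0 : E) 1)).toReal)) ^
      (1 / Module.finrank ℝ E : ℝ) * t ^ (1 / Module.finrank ℝ E : ℝ)))).toReal = t * c := by
  have hV : 0 < (μ (ball (0 : E) 1)).toReal :=
    ENNReal.toReal_pos (measure_ball_pos μ 0 one_pos).ne' measure_ball_lt_top.ne
  rw [← Real.mul_rpow (by positivity) ht, measure_ball_rpow_toReal μ p (by positivity)]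
  field_simp

lemma measure_closedBall_lt_measure_ball (p : E) {r s : ℝ} (hr : 0 ≤ r) (hrs : r < s) :
    μ (closedBall p r) < μ (ball p s) := by
  have hs : 0 < s := hr.trans_lt hrs
  rw [Measure.addHaar_closedBall μ p hr, Measure.addHaar_ball μ p hs.le]
  gcongr
  · exact (measure_ball_pos μ 0 one_pos).ne'
  · exact measure_ball_lt_top.ne
  · exact (ENNReal.ofReal_lt_ofReal_iff (by positivity)).2
      (pow_lt_pow_left₀ hrs hr Module.finrank_pos.ne')

end BallVolume

section PackingRadius

variable {E ι : Type*} [NormedAddCommGroup E] [NormedSpace ℝ E] [FiniteDimensional ℝ E]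
  [MeasurableSpace E] [BorelSpace E] (μ : Measure E) [μ.IsAddHaarMeasure]
  [Fintype ι] {v : Module.Basis ι ℝ E}

lemma measure_fundamentalDomain_toReal_pos : 0 < (μ (fundamentalDomain v)).toReal :=
  ENNReal.toReal_pos (measure_fundamentalDomain_ne_zero v)
    (fundamentalDomain_isBounded v).measure_lt_top.ne

lemma exists_near_finset_card_ge (M : Finset E) (hM : ↑M ⊆ fundamentalDomain v) (p : E)
    {b ρ : ℝ}
    (hρ : (M.card : ℝ) * (μ (ball p ρ)).toReal = (b + 1) * (μ (fundamentalDomain v)).toReal) :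
    ∃ P : Finset E, ↑P ⊆ ((M : Set E) + (span ℤ (Set.range v) : Set E)) \ {p} ∧
      (∀ q ∈ P, dist p q ≤ ρ + diam (fundamentalDomain v)) ∧ b ≤ P.card := by
  classical
  obtain ⟨P, hPS, hPρ, hPμ⟩ := exists_finset_add_span_near μ M hM p ρ
  have hPμ' : (b + 1) * (μ (fundamentalDomain v)).toReal ≤
      P.card * (μ (fundamentalDomain v)).toReal := by
    rw [← hρ]
    simpa using ENNReal.toReal_mono (ENNReal.mul_ne_top (ENNReal.natCast_ne_top _)
      (fundamentalDomain_isBounded v).measure_lt_top.ne) hPμ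
  have hbP : b + 1 ≤ P.card :=
    le_of_mul_le_mul_right hPμ' (measure_fundamentalDomain_toReal_pos μ)
  refine ⟨P.erase p, ?_, fun q hq => hPρ q (Finset.mem_of_mem_erase hq), ?_⟩
  · rw [Finset.coe_erase]
    exact Set.sdiff_subset_sdiff_left hPS
  · have : P.card ≤ (P.erase p).card + 1 := by
      have := Finset.pred_card_le_card_erase (s := P) (a := p)
      omega
    have : (P.card : ℝ) ≤ (P.erase p).card + 1 := by exact_mod_cast this
    linarith

lemma exists_finset_ball_card_lt [Nontrivial E] (M : Finset E) (hM : ↑M ⊆ fundamentalDomain v)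
    {p : E} (hp : p ∈ (M : Set E) + (span ℤ (Set.range v) : Set E)) {b ρ : ℝ} (hb : 0 < b)
    (hρ : (M.card : ℝ) * (μ (ball p ρ)).toReal = (b + 1) * (μ (fundamentalDomain v)).toReal) :
    ∃ A : Finset E, (∀ q ∈ ((M : Set E) + (span ℤ (Set.range v) : Set E)) \ {p},
      dist p q < ρ - diam (fundamentalDomain v) → q ∈ A) ∧ A.card < b := by
  classical
  set d := diam (fundamentalDomain v)
  rcases le_or_gt ρ d with hρd | hdρ
  · refine ⟨∅, fun q _ hq => absurd hq (by linarith [dist_nonneg (x := p) (y := q)]), ?_⟩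
    simpa using hb
  set S := (M : Set E) + (span ℤ (Set.range v) : Set E)
  have hB : (S ∩ ball p (ρ - d)).Finite := finite_add_span_inter M isBounded_ball
  -- The finitely many points of `S` in the open ball `B(p, ρ - d)` lie in a strictly smaller
  -- ball, which is what makes the volume comparison below strict.
  obtain ⟨r, hrρ, hBr⟩ := exists_lt_subset_ball hB.isClosed Set.inter_subset_right
  obtain ⟨A, hA⟩ := hB.exists_finset_coe
  have hAmem : ∀ {q : E}, q ∈ A ↔ q ∈ S ∧ q ∈ ball p (ρ - d) := by
    intro q
    rw [← Finset.mem_coe, hA, Set.mem_inter_iff]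
  have hcount := card_mul_measure_fundamentalDomain_le_of_forall_dist_le μ M hM
    (A := A) (p := p) (r := max r 0) (hA ▸ Set.inter_subset_left) fun q hq =>
      (mem_ball'.1 (hBr (hA ▸ hq))).le.trans (le_max_left r 0)
  have hball := measure_closedBall_lt_measure_ball μ p
    (add_nonneg (le_max_right r 0) diam_nonneg)
    (show max r 0 + d < ρ by rw [← lt_sub_iff_add_lt]; exact max_lt hrρ (by linarith))
  have hM0 : (M.card : ℝ≥0∞) ≠ 0 := by
    obtain ⟨a, ha, -⟩ := hp
    exact Nat.cast_ne_zero.2 (Finset.card_ne_zero_of_mem ha)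
  have hAμ : (A.card : ℝ) * (μ (fundamentalDomain v)).toReal <
      (b + 1) * (μ (fundamentalDomain v)).toReal := by
    rw [← hρ]
    simpa using ENNReal.toReal_strict_mono
      (ENNReal.mul_ne_top (ENNReal.natCast_ne_top _) measure_ball_lt_top.ne)
      (hcount.trans_lt (ENNReal.mul_lt_mul_right hM0 (ENNReal.natCast_ne_top _) hball))
  have hAb : (A.card : ℝ) < b + 1 :=
    lt_of_mul_lt_mul_right hAμ (measure_fundamentalDomain_toReal_pos μ).le
  have hpA : p ∈ A := hAmem.2 ⟨hp, mem_ball_self (by linarith)⟩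
  refine ⟨A.erase p, fun q ⟨hqS, hqp⟩ hq =>
    Finset.mem_erase.2 ⟨hqp, hAmem.2 ⟨hqS, mem_ball'.2 hq⟩⟩, ?_⟩
  have : ((A.erase p).card : ℝ) + 1 = A.card := by
    exact_mod_cast Finset.card_erase_add_one hpA
  linarith

end PackingRadius

theorem stmt_16_general (n m h k : ℕ) (hn : 1 ≤ n) (hm : 1 ≤ m) (hh : 1 ≤ h) (hk : 1 ≤ k)
    (v : Module.Basis (Fin n) ℝ (EuclideanSpace ℝ (Fin n)))
    (Λ : Set (EuclideanSpace ℝ (Fin n)))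
    (hΛ : Λ = {x | ∃ c : Fin n → ℤ, x = ∑ i, (c i : ℝ) • v i})
    (U : Set (EuclideanSpace ℝ (Fin n)))
    (hU : U = {x | ∃ t : Fin n → ℝ, (∀ i, t i ∈ Set.Ico (0 : ℝ) 1) ∧
      x = ∑ i, t i • v i})
    (d : ℝ) (hd : d = Metric.diam U)
    (M : Finset (EuclideanSpace ℝ (Fin n))) (hMcard : M.card = m)
    (hMU : ∀ a ∈ M, a ∈ U)
    (S : Set (EuclideanSpace ℝ (Fin n)))
    (hS : S = {x | ∃ a ∈ M, ∃ g ∈ Λ, x = a + g})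
    (PPC : ℝ)
    (hPPC : PPC = ((MeasureTheory.volume U).toReal /
      ((m : ℝ) * (MeasureTheory.volume
        (Metric.ball (0 : EuclideanSpace ℝ (Fin n)) 1)).toReal)) ^ ((1 : ℝ) / n))
    (b : ℝ) (hbh : (h : ℝ) ≤ b)
    (hbin : (∏ i ∈ Finset.range h, (b - (i : ℝ))) / (h.factorial : ℝ) ∈
      Set.Ioc ((k : ℝ) - 1) (k : ℝ))
    (p : EuclideanSpace ℝ (Fin n)) (hp : p ∈ S) (a : ℝ)
    (hlt_fin : {T : Finset (EuclideanSpace ℝ (Fin n)) |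
      ↑T ⊆ S \ {p} ∧ T.card = h ∧ horderAvg h p T < a}.Finite)
    (hlt_card : {T : Finset (EuclideanSpace ℝ (Fin n)) |
      ↑T ⊆ S \ {p} ∧ T.card = h ∧ horderAvg h p T < a}.ncard ≤ k - 1)
    (hle_card : k ≤ {T : Finset (EuclideanSpace ℝ (Fin n)) |
      ↑T ⊆ S \ {p} ∧ T.card = h ∧ horderAvg h p T ≤ a}.ncard) :
    2 / ((h : ℝ) + 1) * (PPC * (b + 1) ^ ((1 : ℝ) / n) - d) ≤ a ∧
    a ≤ 2 * (h : ℝ) / ((h : ℝ) + 1) * (PPC * (b + 1) ^ ((1 : ℝ) / n) + d) := by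
  have : Nonempty (Fin n) := ⟨⟨0, hn⟩⟩
  rw [setOf_sum_intCast_smul_eq_span] at hΛ
  rw [setOf_sum_smul_Ico_eq_fundamentalDomain] at hU
  subst hΛ hU hd hMcard
  obtain rfl : S = (M : Set _) + (span ℤ (Set.range v) : Set _) := by
    rw [hS]
    ext x
    simp only [Set.mem_ofPred_eq, Set.mem_add, Finset.mem_coe, eq_comm]
  have hρ : (M.card : ℝ) * (volume (ball p (PPC * (b + 1) ^ ((1 : ℝ) / n)))).toReal =
      (b + 1) * (volume (fundamentalDomain v)).toReal := by
    have := natCast_mul_measure_ball_eq volume (m := M.card) (by omega) p ENNReal.toReal_nonneg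
      (by linarith : (0 : ℝ) ≤ b + 1) (c := (volume (fundamentalDomain v)).toReal)
    rwa [finrank_euclideanSpace_fin, ← hPPC] at this
  rw [← descPochhammer_eval_eq_prod_range] at hbin
  have hh' : (1 : ℝ) ≤ h := by exact_mod_cast hh
  constructor
  · by_contra! hlt
    obtain ⟨A, hA, hAb⟩ := exists_finset_ball_card_lt volume M hMU hp (by linarith) hρ
    have := ncard_horderAvg_le_le_choose_card hh hA hlt
    have := choose_lt_of_descPochhammer_div_le hh hk hbin.2 hAb
    omega
  · by_contra! hlt
    obtain ⟨P, hPS, hPρ, hbP⟩ := exists_near_finset_card_ge volume M hMU p hρ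
    have := choose_card_le_ncard_horderAvg_lt hh hPS hPρ hlt hlt_fin
    have := le_choose_of_sub_one_lt_descPochhammer_div hbh hbin.1 hbP
    omega

/-- Let `Λ` be the lattice spanned by a basis `v₁,…,v_n` of
`ℝⁿ`, `U` its unit cell with diameter `d`, `M ⊂ U` a motif of exactly `m ≥ 1`
points, `S = M + Λ`, and `PPC(S) = (vol(U)/(m·V_n))^(1/n)`. Fix `h, k ≥ 1`
and a real `b ≥ h` with `C(b,h) ∈ (k−1, k]`. Then for every `p ∈ S`, the
`k`-th smallest h-order average `a = a(h,k)` at `p` over `h`-element subsets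
of `S∖{p}` (characterized by: at most `k−1` such subsets have average `< a`
and at least `k` have average `≤ a`, with multiplicity) satisfies
`(2/(h+1))·(PPC(S)·(b+1)^(1/n) − d) ≤ a ≤ (2h/(h+1))·(PPC(S)·(b+1)^(1/n) + d)`. -/
theorem stmt_16 (n m h k : ℕ) (hn : 1 ≤ n) (hm : 1 ≤ m) (hh : 1 ≤ h) (hk : 1 ≤ k)
    (v : Module.Basis (Fin n) ℝ (EuclideanSpace ℝ (Fin n)))
    (Λ : Set (EuclideanSpace ℝ (Fin n)))
    (hΛ : Λ = {x | ∃ c : Fin n → ℤ, x = ∑ i, (c i : ℝ) • v i})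
    (U : Set (EuclideanSpace ℝ (Fin n)))
    (hU : U = {x | ∃ t : Fin n → ℝ, (∀ i, t i ∈ Set.Ico (0 : ℝ) 1) ∧
      x = ∑ i, t i • v i})
    (d : ℝ) (hd : d = Metric.diam U)
    (M : Finset (EuclideanSpace ℝ (Fin n))) (hMcard : M.card = m)
    (hMU : ∀ a ∈ M, a ∈ U)
    (S : Set (EuclideanSpace ℝ (Fin n)))
    (hS : S = {x | ∃ a ∈ M, ∃ g ∈ Λ, x = a + g})
    (PPC : ℝ)
    (hPPC : PPC = ((MeasureTheory.volume U).toReal /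
      ((m : ℝ) * (MeasureTheory.volume
        (Metric.ball (0 : EuclideanSpace ℝ (Fin n)) 1)).toReal)) ^ ((1 : ℝ) / n))
    (b : ℝ) (hbh : (h : ℝ) ≤ b)
    (hbin : (∏ i ∈ Finset.range h, (b - (i : ℝ))) / (h.factorial : ℝ) ∈
      Set.Ioc ((k : ℝ) - 1) (k : ℝ))
    (p : EuclideanSpace ℝ (Fin n)) (hp : p ∈ S) (a : ℝ)
    (hlt_fin : {T : Finset (EuclideanSpace ℝ (Fin n)) |
      ↑T ⊆ S \ {p} ∧ T.card = h ∧ horderAvg h p T < a}.Finite)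
    (hlt_card : {T : Finset (EuclideanSpace ℝ (Fin n)) |
      ↑T ⊆ S \ {p} ∧ T.card = h ∧ horderAvg h p T < a}.ncard ≤ k - 1)
    (hle_fin : {T : Finset (EuclideanSpace ℝ (Fin n)) |
      ↑T ⊆ S \ {p} ∧ T.card = h ∧ horderAvg h p T ≤ a}.Finite)
    (hle_card : k ≤ {T : Finset (EuclideanSpace ℝ (Fin n)) |
      ↑T ⊆ S \ {p} ∧ T.card = h ∧ horderAvg h p T ≤ a}.ncard) :
    2 / ((h : ℝ) + 1) * (PPC * (b + 1) ^ ((1 : ℝ) / n) - d) ≤ a ∧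
    a ≤ 2 * (h : ℝ) / ((h : ℝ) + 1) * (PPC * (b + 1) ^ ((1 : ℝ) / n) + d) :=
  stmt_16_general n m h k hn hm hh hk v Λ hΛ U hU d hd M hMcard hMU S hS PPC hPPC b hbh hbin p hp a
    hlt_fin hlt_card hle_card
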